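/- For every real ε with 0 ≤ ε ≤ 1/6, define f_ε : ℕ → [0,1] by f_ε(0) = 1, f_ε(1) = 1−ε, f_ε(2) = min{3/5, 1/2+ε}, and f_ε(d) = min{2/(d+1), 1/d+ε} for d ≥ 3. If φ : ℕ → [0,1] is any lower bound for α_𝓢 (i.e., α_𝓢(G) ≥ ∑_{v ∈ V(G)} φ(d(v)) for every graph G), then there exists ε with 0 ≤ ε ≤ 1/6 such that φ(d) ≤ f_ε(d) for every d ∈ ℕ. -/

import Mathlib

/-- A graph is a forest of stars iff every edge has an endpoint of degree exactly 1
(equivalently, every connected component is a star; a single vertex counts as a star). -/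
def IsStarForest {α : Type*} (H : SimpleGraph α) : Prop :=
  ∀ ⦃v w⦄, H.Adj v w → (H.neighborSet v).ncard = 1 ∨ (H.neighborSet w).ncard = 1

/-- The lower-bound function f_ε for forests of stars. -/
noncomputable def fS (ε : ℝ) (d : ℕ) : ℝ :=
  if d = 0 then 1
  else if d = 1 then 1 - ε
  else if d = 2 then min (3/5) (1/2 + ε)
  else min (2 / ((d : ℝ) + 1)) (1 / (d : ℝ) + ε)

lemma ncard_ne_one {α : Type*} [Finite α] (H : SimpleGraph α) {v a b : α}
    (ha : H.Adj v a) (hb : H.Adj v b) (hab : a ≠ b) : (H.neighborSet v).ncard ≠ 1 := by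
  have h : 1 < (H.neighborSet v).ncard := by
    rw [Set.one_lt_ncard (Set.toFinite _)]
    exact ⟨a, ha, b, hb, hab⟩
  omega

lemma complete_bound {V : Type} [Fintype V] [DecidableEq V] (S : Finset V)
    (h : IsStarForest ((⊤ : SimpleGraph V).induce (S : Set V))) : S.card ≤ 2 := by
  by_contra hc
  push_neg at hc
  obtain ⟨a, ha, b, hb, c, hcm, hab, hac, hbc⟩ := Finset.two_lt_card.mp hc
  set H := (⊤ : SimpleGraph V).induce (S : Set V) with hH
  have ha' : a ∈ (S : Set V) := ha
  have hb' : b ∈ (S : Set V) := hb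
  have hc' : c ∈ (S : Set V) := hcm
  have hadjab : H.Adj ⟨a, ha'⟩ ⟨b, hb'⟩ := by simp [hH, hab]
  have hadjac : H.Adj ⟨a, ha'⟩ ⟨c, hc'⟩ := by simp [hH, hac]
  have hadjba : H.Adj ⟨b, hb'⟩ ⟨a, ha'⟩ := by simp [hH, Ne.symm hab]
  have hadjbc : H.Adj ⟨b, hb'⟩ ⟨c, hc'⟩ := by simp [hH, hbc]
  rcases h hadjab with h1 | h1
  · exact ncard_ne_one H hadjab hadjac (by simpa using hbc) h1
  · exact ncard_ne_one H hadjba hadjbc (by simpa using hac) h1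

lemma isStarForest_iff {α : Type*} [Fintype α] [DecidableEq α] (H : SimpleGraph α)
    [DecidableRel H.Adj] :
    IsStarForest H ↔ ∀ v w, H.Adj v w → H.degree v = 1 ∨ H.degree w = 1 := by
  have key : ∀ v, (H.neighborSet v).ncard = H.degree v := fun v => by
    rw [Set.ncard_eq_toFinset_card']; rfl
  unfold IsStarForest
  simp_rw [key]

def C5' : SimpleGraph (Fin 5) where
  Adj v w := w - v = 1 ∨ v - w = 1
  symm := ⟨fun v w h => h.symm⟩
  loopless := ⟨by intro v; simp⟩

instance : DecidableRel C5'.Adj := fun v w => inferInstanceAs (Decidable (w - v = 1 ∨ v - w = 1))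

lemma C5_degree (v : Fin 5) : C5'.degree v = 2 := by revert v; decide

lemma C5_bound (S : Finset (Fin 5)) (h : IsStarForest (C5'.induce (S : Set (Fin 5)))) :
    S.card ≤ 3 := by
  rw [isStarForest_iff] at h
  revert h
  revert S
  decide

def pAdj (n : ℕ) : (Fin n ⊕ Fin n) → (Fin n ⊕ Fin n) → Prop
  | .inl i, .inl j => i ≠ j
  | .inl i, .inr j => i = j
  | .inr i, .inl j => j = i
  | .inr _, .inr _ => False

instance (n : ℕ) (a b : Fin n ⊕ Fin n) : Decidable (pAdj n a b) := by
  cases a <;> cases b <;> simp only [pAdj] <;> infer_instance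

def Gpend (n : ℕ) : SimpleGraph (Fin n ⊕ Fin n) where
  Adj := pAdj n
  symm := ⟨by rintro (i|i) (j|j) h <;> simp_all [pAdj] <;> tauto⟩
  loopless := ⟨by rintro (i|i) h <;> simp_all [pAdj]⟩

instance (n : ℕ) : DecidableRel (Gpend n).Adj := fun a b =>
  inferInstanceAs (Decidable (pAdj n a b))

lemma Gpend_adj (n : ℕ) (a b : Fin n ⊕ Fin n) : (Gpend n).Adj a b ↔ pAdj n a b := Iff.rfl

lemma Gpend_degree_inr (n : ℕ) (i : Fin n) : (Gpend n).degree (Sum.inr i) = 1 := by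
  have : (Gpend n).neighborFinset (Sum.inr i) = {Sum.inl i} := by
    ext x
    cases x <;> simp [SimpleGraph.mem_neighborFinset, Gpend_adj, pAdj]
  rw [SimpleGraph.degree, this, Finset.card_singleton]

lemma Gpend_degree_inl (n : ℕ) (i : Fin n) : (Gpend n).degree (Sum.inl i) = n := by
  have : (Gpend n).neighborFinset (Sum.inl i) =
      (Finset.univ.erase i).image Sum.inl ∪ {Sum.inr i} := by
    ext x
    cases x <;> simp [SimpleGraph.mem_neighborFinset, Gpend_adj, pAdj, eq_comm, Ne.symm]
  rw [SimpleGraph.degree, this, Finset.card_union_of_disjoint (by simp),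
    Finset.card_image_of_injective _ Sum.inl_injective, Finset.card_erase_of_mem (Finset.mem_univ i),
    Finset.card_univ, Fintype.card_fin, Finset.card_singleton]
  have := i.pos
  omega

lemma pend_bound (n : ℕ) (S : Finset (Fin n ⊕ Fin n))
    (h : IsStarForest ((Gpend n).induce (S : Set (Fin n ⊕ Fin n)))) : S.card ≤ n + 1 := by
  set A : Finset (Fin n) := Finset.univ.filter (fun i => Sum.inl i ∈ S) with hA
  set B : Finset (Fin n) := Finset.univ.filter (fun i => Sum.inr i ∈ S) with hB
  have hScard : S.card = A.card + B.card := by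
    have hS : S = A.image Sum.inl ∪ B.image Sum.inr := by
      ext x; cases x <;> simp [hA, hB]
    rw [hS, Finset.card_union_of_disjoint, Finset.card_image_of_injective _ Sum.inl_injective,
      Finset.card_image_of_injective _ Sum.inr_injective]
    simp [Finset.disjoint_left]
  have hBn : B.card ≤ n := by
    simpa using Finset.card_filter_le Finset.univ (fun i => Sum.inr i ∈ S)
  set H := (Gpend n).induce (S : Set (Fin n ⊕ Fin n)) with hH
  rcases Nat.lt_or_ge A.card 2 with hA2 | hA2
  · omega
  rcases Nat.lt_or_ge A.card 3 with hA3 | hA3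
  · -- A.card = 2
    have hcard2 : A.card = 2 := by omega
    obtain ⟨i, j, hij, hAij⟩ := Finset.card_eq_two.mp hcard2
    have hiS : Sum.inl i ∈ (S : Set (Fin n ⊕ Fin n)) := by
      have : i ∈ A := by rw [hAij]; simp
      rw [hA] at this; simpa using this
    have hjS : Sum.inl j ∈ (S : Set (Fin n ⊕ Fin n)) := by
      have : j ∈ A := by rw [hAij]; simp
      rw [hA] at this; simpa using this
    have hadj : H.Adj ⟨Sum.inl i, hiS⟩ ⟨Sum.inl j, hjS⟩ := hij
    have key : i ∉ B ∨ j ∉ B := by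
      rcases h hadj with h1 | h1
      · left
        intro hiB
        have hiS' : Sum.inr i ∈ (S : Set (Fin n ⊕ Fin n)) := by
          rw [hB] at hiB; simpa using hiB
        have hadj2 : H.Adj ⟨Sum.inl i, hiS⟩ ⟨Sum.inr i, hiS'⟩ := rfl
        exact ncard_ne_one H hadj hadj2 (by simp) h1
      · right
        intro hjB
        have hjS' : Sum.inr j ∈ (S : Set (Fin n ⊕ Fin n)) := by
          rw [hB] at hjB; simpa using hjB
        have hadj1 : H.Adj ⟨Sum.inl j, hjS⟩ ⟨Sum.inl i, hiS⟩ := Ne.symm hij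
        have hadj2 : H.Adj ⟨Sum.inl j, hjS⟩ ⟨Sum.inr j, hjS'⟩ := rfl
        exact ncard_ne_one H hadj1 hadj2 (by simp) h1
    have hB1 : B.card ≤ n - 1 := by
      rcases key with hk | hk
      all_goals {
        have hsub : B ⊆ Finset.univ.erase _ := Finset.subset_erase.mpr ⟨Finset.subset_univ B, hk⟩
        have := Finset.card_le_card hsub
        rw [Finset.card_erase_of_mem (Finset.mem_univ _), Finset.card_univ, Fintype.card_fin] at this
        exact this
      }
    have := i.pos
    omega
  · -- A.card ≥ 3 : contradiction
    exfalso
    obtain ⟨i, hi, j, hj, k, hk, hij, hik, hjk⟩ := Finset.two_lt_card.mp hA3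
    rw [hA] at hi hj hk
    have hiS : Sum.inl i ∈ (S : Set (Fin n ⊕ Fin n)) := by simpa using hi
    have hjS : Sum.inl j ∈ (S : Set (Fin n ⊕ Fin n)) := by simpa using hj
    have hkS : Sum.inl k ∈ (S : Set (Fin n ⊕ Fin n)) := by simpa using hk
    have hadjij : H.Adj ⟨Sum.inl i, hiS⟩ ⟨Sum.inl j, hjS⟩ := hij
    have hadjik : H.Adj ⟨Sum.inl i, hiS⟩ ⟨Sum.inl k, hkS⟩ := hik
    have hadjji : H.Adj ⟨Sum.inl j, hjS⟩ ⟨Sum.inl i, hiS⟩ := Ne.symm hij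
    have hadjjk : H.Adj ⟨Sum.inl j, hjS⟩ ⟨Sum.inl k, hkS⟩ := hjk
    rcases h hadjij with h1 | h1
    · exact ncard_ne_one H hadjij hadjik (by simpa using hjk) h1
    · exact ncard_ne_one H hadjji hadjjk (by simpa using hik) h1

/-- Every lower bound φ : ℕ → [0,1] for induced forests of stars is dominated by f_ε
for some 0 ≤ ε ≤ 1/6. -/
theorem stmt8 (φ : ℕ → ℝ) (hφ : ∀ d, 0 ≤ φ d ∧ φ d ≤ 1)
    (hlb : ∀ (V : Type) [Fintype V] [DecidableEq V] (G : SimpleGraph V) [DecidableRel G.Adj],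
      ∃ S : Finset V, IsStarForest (G.induce (S : Set V)) ∧
        ∑ v, φ (G.degree v) ≤ (S.card : ℝ)) :
    ∃ ε : ℝ, 0 ≤ ε ∧ ε ≤ 1/6 ∧ ∀ d, φ d ≤ fS ε d := by
  have hK : ∀ d : ℕ, ((d : ℝ) + 1) * φ d ≤ 2 := by
    intro d
    obtain ⟨S, hSF, hsum⟩ := hlb (Fin (d+1)) ⊤
    have hcard := complete_bound S hSF
    rw [show (∑ v : Fin (d+1), φ ((⊤ : SimpleGraph (Fin (d+1))).degree v)) = ((d:ℝ)+1) * φ d by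
      simp only [SimpleGraph.complete_graph_degree, Fintype.card_fin, Nat.add_sub_cancel]
      rw [Finset.sum_const, Finset.card_univ, Fintype.card_fin, nsmul_eq_mul]
      push_cast; ring] at hsum
    calc ((d:ℝ)+1) * φ d ≤ (S.card : ℝ) := hsum
      _ ≤ 2 := by exact_mod_cast hcard
  have hC5 : 5 * φ 2 ≤ 3 := by
    obtain ⟨S, hSF, hsum⟩ := hlb (Fin 5) C5'
    have hcard := C5_bound S hSF
    rw [show (∑ v : Fin 5, φ (C5'.degree v)) = 5 * φ 2 by
      simp only [C5_degree]
      rw [Finset.sum_const, Finset.card_univ, Fintype.card_fin, nsmul_eq_mul]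
      norm_num] at hsum
    calc (5:ℝ) * φ 2 ≤ (S.card : ℝ) := hsum
      _ ≤ 3 := by exact_mod_cast hcard
  have hP : ∀ n : ℕ, (n : ℝ) * φ n + (n : ℝ) * φ 1 ≤ (n : ℝ) + 1 := by
    intro n
    obtain ⟨S, hSF, hsum⟩ := hlb (Fin n ⊕ Fin n) (Gpend n)
    have hcard := pend_bound n S hSF
    rw [show (∑ v : Fin n ⊕ Fin n, φ ((Gpend n).degree v))
        = (n : ℝ) * φ n + (n : ℝ) * φ 1 by
      rw [Fintype.sum_sum_type]
      simp only [Gpend_degree_inl, Gpend_degree_inr]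
      rw [Finset.sum_const, Finset.sum_const, Finset.card_univ, Fintype.card_fin,
        nsmul_eq_mul, nsmul_eq_mul]] at hsum
    calc (n : ℝ) * φ n + (n : ℝ) * φ 1 ≤ (S.card : ℝ) := hsum
      _ ≤ (n : ℝ) + 1 := by exact_mod_cast hcard
  refine ⟨min (1/6) (1 - φ 1), le_min (by norm_num) (by linarith [(hφ 1).2]),
    min_le_left _ _, ?_⟩
  set ε := min (1/6 : ℝ) (1 - φ 1) with hε
  intro d
  match d with
  | 0 => simpa [fS] using (hφ 0).2
  | 1 =>
    have h := min_le_right (1/6 : ℝ) (1 - φ 1)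
    simp only [fS]; norm_num
    linarith
  | 2 =>
    simp only [fS]; norm_num
    have hP2 := hP 2
    push_cast at hP2
    constructor
    · linarith
    · have : φ 2 - 1/2 ≤ ε := le_min (by linarith) (by linarith)
      linarith
  | (m+3) =>
    have h0 : m+3 ≠ 0 := by omega
    have h1 : m+3 ≠ 1 := by omega
    have h2 : m+3 ≠ 2 := by omega
    simp only [fS, if_neg h0, if_neg h1, if_neg h2]
    set x : ℝ := ((m+3 : ℕ) : ℝ) with hx
    have hx3 : (3:ℝ) ≤ x := by rw [hx]; push_cast; linarith
    have hx0 : (0:ℝ) < x := by linarith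
    have hKd := hK (m+3)
    have hPd := hP (m+3)
    rw [← hx] at hKd hPd
    have hdiv : φ (m+3) ≤ 2 / (x+1) := by
      rw [le_div_iff₀ (by linarith)]
      linarith [hKd]
    refine le_min hdiv ?_
    have hxu : x * (1/x) = 1 := by field_simp
    have hu0 : (0:ℝ) ≤ 1/x := by positivity
    have h6 : φ (m+3) - 1/x ≤ 1/6 := by
      have key : 2/(x+1) ≤ 1/x + 1/6 := by
        rw [div_le_iff₀ (by linarith)]
        nlinarith [hxu, hu0, hx3, mul_nonneg (by linarith : (0:ℝ) ≤ x - 2)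
          (by linarith : (0:ℝ) ≤ x - 3)]
      linarith
    have hr : φ (m+3) - 1/x ≤ 1 - φ 1 := by
      nlinarith [hPd, hxu, hx0, (hφ (m+3)).1, (hφ 1).1]
    have : φ (m+3) - 1/x ≤ ε := le_min h6 hr
    linarith
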